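/- For the explicit piecewise linear density f one has f(x − a_{m_n}) ~ f(x) uniformly on the blocks (a_n, a_{n+1}]: for every ε > 0 there exists N such that for all n ≥ N and all x ∈ (a_n, a_{n+1}], |f(x − a_{m_n})/f(x) − 1| ≤ ε. -/

import Mathlib

open MeasureTheory Filter Set

noncomputable section

/-- `a_n = 2^(n²)`. -/
def aSeq (n : ℕ) : ℝ := 2 ^ (n ^ 2)

/-- `m_n` : the least positive integer `k` with `k ≥ (√5/√6)·n`. -/
def mIdx (n : ℕ) : ℕ := max 1 ⌈(Real.sqrt 5 / Real.sqrt 6) * (n : ℝ)⌉₊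

/-- `b_n = a_n + a_{m_n}·(ln (n+1))²`. -/
def bSeq (n : ℕ) : ℝ := aSeq n + aSeq (mIdx n) * (Real.log ((n : ℝ) + 1)) ^ 2

/-- `c_n = (a_{n+1} + b_n)/2`. -/
def cSeq (n : ℕ) : ℝ := (aSeq (n + 1) + bSeq n) / 2

/-- `f` is affine (the linear interpolation of its endpoint values) on `[p, q]`. -/
def AffineOnIcc (f : ℝ → ℝ) (p q : ℝ) : Prop :=
  ∀ x ∈ Set.Icc p q, f x = f p + (x - p) / (q - p) * (f q - f p)

/-- The explicit continuous piecewise linear construction `f₀ : [0,∞) → (0,∞)`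
with `f₀(0) = 1`, `f₀(a_n) = 2 a_n⁻³`, `f₀(b_n) = 2 a_n⁻³ / ln(n+1)`,
`f₀(c_n) = 2 a_n⁻³`, affine on `[0,a₁]`, `[a_n,b_n]`, `[b_n,c_n]`, `[c_n,a_{n+1}]`. -/
def PWConstruction (f₀ : ℝ → ℝ) : Prop :=
  ContinuousOn f₀ (Set.Ici 0) ∧
  (∀ x : ℝ, 0 ≤ x → 0 < f₀ x) ∧
  f₀ 0 = 1 ∧
  (∀ n : ℕ, 1 ≤ n →
    f₀ (aSeq n) = 2 / (aSeq n) ^ 3 ∧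
    f₀ (bSeq n) = 2 / (aSeq n) ^ 3 / Real.log ((n : ℝ) + 1) ∧
    f₀ (cSeq n) = 2 / (aSeq n) ^ 3) ∧
  AffineOnIcc f₀ 0 (aSeq 1) ∧
  (∀ n : ℕ, 1 ≤ n →
    AffineOnIcc f₀ (aSeq n) (bSeq n) ∧
    AffineOnIcc f₀ (bSeq n) (cSeq n) ∧
    AffineOnIcc f₀ (cSeq n) (aSeq (n + 1)))

/-- The normalized extension `f = f₀ / ∫₀^∞ f₀(y) dy`, extended by `0` on `(-∞,0)`. -/
def normExt (f₀ : ℝ → ℝ) : ℝ → ℝ :=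
  fun x => if x < 0 then 0 else f₀ x / ∫ y in Set.Ici (0:ℝ), f₀ y

/-!
Write `s = a_{m_n}` and `L = ln(n+1)`. Around the block `(a_n, a_{n+1}]` the function `f₀` is
affine between the consecutive nodes `c_{n-1}, a_n, b_n, c_n, a_{n+1}`, hence Lipschitz on each
stretch of nodes, and `|f₀(x - s)/f₀(x) - 1| ≤ K s / min f₀` whenever `x - s` and `x` lie in a
stretch with Lipschitz constant `K`. For `x ≤ c_n` the steep piece `[a_n, b_n]` (length `s L²`,
drop at most `2 a_n⁻³`, while `f₀ ≥ 2 a_n⁻³ / L` there) contributes `1/L`, and its neighbours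
contribute `O(s L a_n² / a_{n-1}³)`; for `x > c_n` the bound is `O(s a_{n+1}² / a_n³)`. Since
`m_n ≤ n - 4` eventually, both error terms are at most `2^{16-n}`. The normalisation cancels in
the ratio because `f₀ > 0` is integrable (it is at most `2 / y²` beyond `a_5`).
-/

open Real
open scoped NNReal ENNReal Topology

namespace AffineOnIcc

variable {f : ℝ → ℝ} {p q : ℝ}

lemma sub_eq (h : AffineOnIcc f p q) {u v : ℝ} (hu : u ∈ Icc p q) (hv : v ∈ Icc p q) :
    f v - f u = (v - u) / (q - p) * (f q - f p) := by
  rw [h u hu, h v hv]; ring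

lemma mem_uIcc (h : AffineOnIcc f p q) {x : ℝ} (hx : x ∈ Icc p q) :
    f x ∈ uIcc (f p) (f q) := by
  have hpq : 0 ≤ q - p := sub_nonneg.2 (hx.1.trans hx.2)
  have ht : (x - p) / (q - p) ∈ Icc (0 : ℝ) 1 :=
    ⟨div_nonneg (sub_nonneg.2 hx.1) hpq, div_le_one_of_le₀ (by linarith [hx.2]) hpq⟩
  rw [← segment_eq_uIcc, h x hx]
  convert lineMap_mem_segment ℝ (f p) (f q) ht using 1
  rw [AffineMap.lineMap_apply_ring']; ring

lemma lipschitzOnWith (h : AffineOnIcc f p q) {K ℓ : ℝ} (hℓ : 0 < ℓ) (hℓpq : ℓ ≤ q - p)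
    (hK : |f q - f p| ≤ K * ℓ) : LipschitzOnWith K.toNNReal f (Icc p q) := by
  have hK0 : 0 ≤ K := nonneg_of_mul_nonneg_left ((abs_nonneg _).trans hK) hℓ
  refine LipschitzOnWith.of_dist_le_mul fun u hu v hv ↦ ?_
  rw [coe_toNNReal _ hK0, Real.dist_eq, Real.dist_eq, h.sub_eq hv hu, abs_mul, abs_div,
    abs_of_pos (hℓ.trans_le hℓpq)]
  calc |u - v| / (q - p) * |f q - f p| ≤ |u - v| / ℓ * (K * ℓ) := by gcongr
    _ = K * |u - v| := by field_simp

end AffineOnIcc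

lemma LipschitzOnWith.Icc_trans {β : Type*} [PseudoMetricSpace β] {f : ℝ → β} {K : ℝ≥0}
    {a b c : ℝ} (hab : LipschitzOnWith K f (Icc a b)) (hbc : LipschitzOnWith K f (Icc b c)) :
    LipschitzOnWith K f (Icc a c) := by
  have key : ∀ u ∈ Icc a c, ∀ v ∈ Icc a c, u ≤ v → dist (f u) (f v) ≤ K * dist u v := by
    intro u hu v hv huv
    rcases le_or_gt v b with hvb | hbv
    · exact hab.dist_le_mul u ⟨hu.1, huv.trans hvb⟩ v ⟨hv.1, hvb⟩
    rcases le_or_gt b u with hbu | hub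
    · exact hbc.dist_le_mul u ⟨hbu, hu.2⟩ v ⟨hbu.trans huv, hv.2⟩
    calc dist (f u) (f v) ≤ dist (f u) (f b) + dist (f b) (f v) := dist_triangle _ _ _
      _ ≤ K * dist u b + K * dist b v :=
          add_le_add (hab.dist_le_mul u ⟨hu.1, hub.le⟩ b ⟨hu.1.trans hub.le, le_rfl⟩)
            (hbc.dist_le_mul b ⟨le_rfl, hbv.le.trans hv.2⟩ v ⟨hbv.le, hv.2⟩)
      _ = K * dist u v := by
          rw [Real.dist_eq, Real.dist_eq, Real.dist_eq, abs_of_neg (sub_neg.2 hub),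
            abs_of_neg (sub_neg.2 hbv), abs_of_nonpos (sub_nonpos.2 huv)]
          ring
  refine LipschitzOnWith.of_dist_le_mul fun u hu v hv ↦ ?_
  rcases le_total u v with huv | hvu
  · exact key u hu v hv huv
  · rw [dist_comm, dist_comm u]; exact key v hv u hu hvu

lemma LipschitzOnWith.abs_div_sub_one_le {g : ℝ → ℝ} {K : ℝ≥0} {S : Set ℝ} {x y m : ℝ}
    (hg : LipschitzOnWith K g S) (hx : x ∈ S) (hy : y ∈ S) (hm : 0 < m) (hmx : m ≤ g x) :
    |g y / g x - 1| ≤ K * |y - x| / m := by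
  have hgx : 0 < g x := hm.trans_le hmx
  rw [div_sub_one hgx.ne', abs_div, abs_of_pos hgx]
  calc |g y - g x| / g x ≤ K * |y - x| / g x := by
        gcongr; simpa only [Real.dist_eq] using hg.dist_le_mul y hy x hx
    _ ≤ K * |y - x| / m := by gcongr

lemma aSeq_pos (n : ℕ) : 0 < aSeq n := by
  unfold aSeq; positivity

lemma aSeq_strictMono : StrictMono aSeq := fun _ _ h ↦
  pow_lt_pow_right₀ one_lt_two (Nat.pow_lt_pow_left h two_ne_zero)

lemma tendsto_aSeq_atTop : Tendsto aSeq atTop atTop :=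
  (tendsto_pow_atTop_atTop_of_one_lt one_lt_two).comp (tendsto_pow_atTop two_ne_zero)

lemma aSeq_pow (n j : ℕ) : aSeq n ^ j = 2 ^ (j * n ^ 2) := by
  rw [aSeq, ← pow_mul, mul_comm]

lemma four_mul_aSeq_le {m k : ℕ} (h : m + 2 ≤ k) : 4 * aSeq m ≤ aSeq k := by
  calc 4 * aSeq m = 2 ^ (m ^ 2 + 2) := by rw [aSeq, pow_add]; ring
    _ ≤ aSeq k := pow_le_pow_right₀ one_le_two (by nlinarith)

lemma log_natCast_add_one_le (n : ℕ) : log ((n : ℝ) + 1) ≤ n := by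
  linarith [log_le_sub_one_of_pos (by positivity : (0 : ℝ) < n + 1)]

lemma log_natCast_add_one_le_two_pow (n : ℕ) : log ((n : ℝ) + 1) ≤ 2 ^ n :=
  (log_natCast_add_one_le n).trans (by exact_mod_cast Nat.lt_two_pow_self.le)

lemma one_le_log_natCast_add_one {n : ℕ} (hn : 2 ≤ n) : 1 ≤ log ((n : ℝ) + 1) := by
  have : (2 : ℝ) ≤ n := by exact_mod_cast hn
  rw [le_log_iff_exp_le (by positivity)]
  linarith [exp_one_lt_d9]

lemma one_le_mIdx (n : ℕ) : 1 ≤ mIdx n := le_max_left _ _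

lemma sqrt_five_div_sqrt_six_le : √5 / √6 ≤ 11 / 12 := by
  rw [div_le_iff₀ (by positivity), ← sqrt_sq (by norm_num : (0 : ℝ) ≤ 11 / 12),
    ← sqrt_mul (by norm_num)]
  exact sqrt_le_sqrt (by norm_num)

lemma mIdx_le_self {n : ℕ} (hn : 1 ≤ n) : mIdx n ≤ n := by
  refine max_le hn (Nat.ceil_le.2 ?_)
  have := mul_le_mul_of_nonneg_right sqrt_five_div_sqrt_six_le (Nat.cast_nonneg (α := ℝ) n)
  linarith

lemma mIdx_add_four_le {n : ℕ} (hn : 48 ≤ n) : mIdx n + 4 ≤ n := by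
  suffices mIdx n ≤ n - 4 by omega
  refine max_le (by omega) (Nat.ceil_le.2 ?_)
  have := mul_le_mul_of_nonneg_right sqrt_five_div_sqrt_six_le (Nat.cast_nonneg (α := ℝ) n)
  have : (48 : ℝ) ≤ n := by exact_mod_cast hn
  rw [Nat.cast_sub (by omega)]
  push_cast
  linarith

lemma bSeq_sub_aSeq (n : ℕ) :
    bSeq n - aSeq n = aSeq (mIdx n) * log ((n : ℝ) + 1) ^ 2 := by
  rw [bSeq]; ring

lemma bSeq_le_half {n : ℕ} (hn : 1 ≤ n) : bSeq n ≤ aSeq (n + 1) / 2 := by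
  have ha := aSeq_pos n
  have hm : aSeq (mIdx n) ≤ aSeq n := aSeq_strictMono.monotone (mIdx_le_self hn)
  have hL : log ((n : ℝ) + 1) ^ 2 ≤ (n : ℝ) ^ 2 :=
    pow_le_pow_left₀ (log_nonneg (by linarith [n.cast_nonneg (α := ℝ)]))
      (log_natCast_add_one_le n) 2
  have h2n : (n : ℝ) + 1 ≤ 2 ^ n := by exact_mod_cast Nat.lt_two_pow_self
  have hsucc : aSeq (n + 1) = 2 * (2 ^ n) ^ 2 * aSeq n := by
    rw [aSeq, aSeq, ← pow_mul, ← pow_succ', ← pow_add]; ring_nf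
  calc bSeq n = aSeq n + aSeq (mIdx n) * log ((n : ℝ) + 1) ^ 2 := rfl
    _ ≤ aSeq n + aSeq n * (n : ℝ) ^ 2 := by gcongr
    _ ≤ aSeq n * ((n : ℝ) + 1) ^ 2 := by nlinarith [n.cast_nonneg (α := ℝ)]
    _ ≤ aSeq n * (2 ^ n) ^ 2 := by gcongr
    _ = aSeq (n + 1) / 2 := by rw [hsucc]; ring

lemma aSeq_lt_bSeq {n : ℕ} (hn : 1 ≤ n) : aSeq n < bSeq n := by
  have := aSeq_pos (mIdx n)
  have : 0 < log ((n : ℝ) + 1) := log_pos (by norm_cast; omega)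
  linarith [bSeq_sub_aSeq n, (by positivity : 0 < aSeq (mIdx n) * log ((n : ℝ) + 1) ^ 2)]

lemma quarter_le_cSeq_sub_bSeq {n : ℕ} (hn : 1 ≤ n) : aSeq (n + 1) / 4 ≤ cSeq n - bSeq n := by
  rw [cSeq]; linarith [bSeq_le_half hn]

lemma quarter_le_aSeq_succ_sub_cSeq {n : ℕ} (hn : 1 ≤ n) :
    aSeq (n + 1) / 4 ≤ aSeq (n + 1) - cSeq n := by
  rw [cSeq]; linarith [bSeq_le_half hn]

lemma four_mul_aSeq_mul_log_mul_div_le {m n : ℕ} (hm : m + 3 ≤ n) {L : ℝ} (hL0 : 0 ≤ L)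
    (hL : L ≤ 2 ^ (n + 1)) :
    4 * aSeq m * L * aSeq (n + 1) ^ 2 / aSeq n ^ 3 ≤ 2 ^ 15 / 2 ^ (n + 1) := by
  rw [div_le_div_iff₀ (pow_pos (aSeq_pos n) 3) (by positivity), aSeq_pow, aSeq_pow, aSeq]
  calc 4 * 2 ^ m ^ 2 * L * 2 ^ (2 * (n + 1) ^ 2) * 2 ^ (n + 1)
      ≤ 2 ^ 2 * 2 ^ m ^ 2 * 2 ^ (n + 1) * 2 ^ (2 * (n + 1) ^ 2) * 2 ^ (n + 1) := by
        gcongr; norm_num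
    _ = 2 ^ (2 + m ^ 2 + (n + 1) + 2 * (n + 1) ^ 2 + (n + 1)) := by simp only [pow_add]
    _ ≤ 2 ^ (15 + 3 * n ^ 2) := pow_le_pow_right₀ one_le_two (by nlinarith)
    _ = 2 ^ 15 * 2 ^ (3 * n ^ 2) := pow_add _ _ _

lemma four_mul_aSeq_mul_div_le {m n : ℕ} (hm : m + 4 ≤ n) :
    4 * aSeq m * aSeq (n + 1) ^ 2 / aSeq n ^ 3 ≤ 2 ^ 16 / 2 ^ n := by
  rw [div_le_div_iff₀ (pow_pos (aSeq_pos n) 3) (by positivity), aSeq_pow, aSeq_pow, aSeq]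
  calc 4 * 2 ^ m ^ 2 * 2 ^ (2 * (n + 1) ^ 2) * 2 ^ n
      = (2 : ℝ) ^ (2 + m ^ 2 + 2 * (n + 1) ^ 2 + n) := by simp only [pow_add]; norm_num
    _ ≤ 2 ^ (16 + 3 * n ^ 2) := pow_le_pow_right₀ one_le_two (by nlinarith)
    _ = 2 ^ 16 * 2 ^ (3 * n ^ 2) := pow_add _ _ _

namespace PWConstruction

variable {f₀ : ℝ → ℝ}

lemma pos (hf₀ : PWConstruction f₀) {x : ℝ} (hx : 0 ≤ x) : 0 < f₀ x := hf₀.2.1 x hx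

lemma apply_aSeq (hf₀ : PWConstruction f₀) {n : ℕ} (hn : 1 ≤ n) :
    f₀ (aSeq n) = 2 / aSeq n ^ 3 := (hf₀.2.2.2.1 n hn).1

lemma apply_bSeq (hf₀ : PWConstruction f₀) {n : ℕ} (hn : 1 ≤ n) :
    f₀ (bSeq n) = 2 / aSeq n ^ 3 / log ((n : ℝ) + 1) := (hf₀.2.2.2.1 n hn).2.1

lemma apply_cSeq (hf₀ : PWConstruction f₀) {n : ℕ} (hn : 1 ≤ n) :
    f₀ (cSeq n) = 2 / aSeq n ^ 3 := (hf₀.2.2.2.1 n hn).2.2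

lemma affineOnIcc_aSeq_bSeq (hf₀ : PWConstruction f₀) {n : ℕ} (hn : 1 ≤ n) :
    AffineOnIcc f₀ (aSeq n) (bSeq n) := (hf₀.2.2.2.2.2 n hn).1

lemma affineOnIcc_bSeq_cSeq (hf₀ : PWConstruction f₀) {n : ℕ} (hn : 1 ≤ n) :
    AffineOnIcc f₀ (bSeq n) (cSeq n) := (hf₀.2.2.2.2.2 n hn).2.1

lemma affineOnIcc_cSeq_aSeq (hf₀ : PWConstruction f₀) {n : ℕ} (hn : 1 ≤ n) :
    AffineOnIcc f₀ (cSeq n) (aSeq (n + 1)) := (hf₀.2.2.2.2.2 n hn).2.2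

lemma apply_bSeq_mem_Icc (hf₀ : PWConstruction f₀) {n : ℕ} (hn : 2 ≤ n) :
    f₀ (bSeq n) ∈ Icc (2 / aSeq n ^ 3 / log ((n : ℝ) + 1)) (2 / aSeq n ^ 3) := by
  have := aSeq_pos n
  rw [hf₀.apply_bSeq (by omega)]
  exact ⟨le_rfl, div_le_self (by positivity) (one_le_log_natCast_add_one hn)⟩

lemma apply_le_of_mem_Icc (hf₀ : PWConstruction f₀) {n : ℕ} (hn : 2 ≤ n) {x : ℝ}
    (hx : x ∈ Icc (aSeq n) (aSeq (n + 1))) : f₀ x ≤ 2 / aSeq n ^ 3 := by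
  have hn1 : 1 ≤ n := by omega
  have := aSeq_pos n
  have ha := (hf₀.apply_aSeq hn1).le
  have hb := (hf₀.apply_bSeq_mem_Icc hn).2
  have hc := (hf₀.apply_cSeq hn1).le
  have ha' : f₀ (aSeq (n + 1)) ≤ 2 / aSeq n ^ 3 := by
    rw [hf₀.apply_aSeq (by omega)]
    gcongr
    exact aSeq_strictMono.monotone n.le_succ
  rcases le_or_gt x (bSeq n) with hxb | hbx
  · exact ((hf₀.affineOnIcc_aSeq_bSeq hn1).mem_uIcc ⟨hx.1, hxb⟩).2.trans (sup_le ha hb)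
  rcases le_or_gt x (cSeq n) with hxc | hcx
  · exact ((hf₀.affineOnIcc_bSeq_cSeq hn1).mem_uIcc ⟨hbx.le, hxc⟩).2.trans (sup_le hb hc)
  · exact ((hf₀.affineOnIcc_cSeq_aSeq hn1).mem_uIcc ⟨hcx.le, hx.2⟩).2.trans (sup_le hc ha')

lemma apply_le_two_div_sq (hf₀ : PWConstruction f₀) {y : ℝ} (hy : aSeq 5 < y) :
    f₀ y ≤ 2 / y ^ 2 := by
  obtain ⟨n, hn, hn'⟩ := StrictMono.exists_between_of_tendsto_atTop
    (t := fun n ↦ aSeq (n + 5)) (fun _ _ h ↦ aSeq_strictMono (by omega))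
    (tendsto_aSeq_atTop.comp (tendsto_add_atTop_nat 5)) hy
  have hy0 : 0 < y := (aSeq_pos _).trans hy
  have hsq : y ^ 2 ≤ aSeq (n + 5) ^ 3 :=
    calc y ^ 2 ≤ aSeq (n + 5 + 1) ^ 2 := by gcongr
      _ ≤ aSeq (n + 5) ^ 3 := by
          rw [aSeq_pow, aSeq_pow]
          exact pow_le_pow_right₀ one_le_two (by ring_nf; nlinarith [sq_nonneg n])
  calc f₀ y ≤ 2 / aSeq (n + 5) ^ 3 := hf₀.apply_le_of_mem_Icc (by omega) ⟨hn.le, hn'⟩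
    _ ≤ 2 / y ^ 2 := by gcongr

lemma integrableOn (hf₀ : PWConstruction f₀) : IntegrableOn f₀ (Ici 0) := by
  have ha5 := aSeq_pos 5
  rw [← Icc_union_Ioi_eq_Ici ha5.le]
  refine ((hf₀.1.mono Icc_subset_Ici_self).integrableOn_compact isCompact_Icc).union ?_
  refine (((integrableOn_Ioi_rpow_of_lt (by norm_num : (-2 : ℝ) < -1) ha5).const_mul 2).mono'
    ((hf₀.1.mono (Ioi_subset_Ici ha5.le)).aestronglyMeasurable measurableSet_Ioi) ?_)
  filter_upwards [ae_restrict_mem measurableSet_Ioi] with y hy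
  have hy0 : 0 < y := ha5.trans hy
  rw [norm_of_nonneg (hf₀.pos hy0.le).le, rpow_neg hy0.le, rpow_two, ← div_eq_mul_inv]
  exact hf₀.apply_le_two_div_sq hy

lemma integral_pos (hf₀ : PWConstruction f₀) : 0 < ∫ y in Ici (0 : ℝ), f₀ y := by
  refine (setIntegral_pos_iff_support_of_nonneg_ae ?_ hf₀.integrableOn).2 ?_
  · filter_upwards [ae_restrict_mem measurableSet_Ici] with y hy using (hf₀.pos hy).le
  · have : Ici (0 : ℝ) ⊆ Function.support f₀ ∩ Ici 0 := fun y hy ↦ ⟨(hf₀.pos hy).ne', hy⟩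
    exact (by simp : (0 : ℝ≥0∞) < volume (Ici (0 : ℝ))).trans_le (measure_mono this)

lemma normExt_div_normExt (hf₀ : PWConstruction f₀) {x y : ℝ} (hx : 0 ≤ x) (hy : 0 ≤ y) :
    normExt f₀ y / normExt f₀ x = f₀ y / f₀ x := by
  simp only [normExt, if_neg (not_lt.2 hx), if_neg (not_lt.2 hy)]
  exact div_div_div_cancel_right₀ hf₀.integral_pos.ne' _ _

lemma lipschitzOnWith_cSeq_aSeq (hf₀ : PWConstruction f₀) {n : ℕ} (hn : 1 ≤ n) :
    LipschitzOnWith (8 / (aSeq n ^ 3 * aSeq (n + 1))).toNNReal f₀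
      (Icc (cSeq n) (aSeq (n + 1))) := by
  have := aSeq_pos n
  have := aSeq_pos (n + 1)
  refine (hf₀.affineOnIcc_cSeq_aSeq hn).lipschitzOnWith (by positivity)
    (quarter_le_aSeq_succ_sub_cSeq hn) ?_
  rw [hf₀.apply_aSeq (by omega), hf₀.apply_cSeq hn]
  calc |2 / aSeq (n + 1) ^ 3 - 2 / aSeq n ^ 3| ≤ 2 / aSeq n ^ 3 :=
        abs_sub_le_of_nonneg_of_le (by positivity)
          (by gcongr; exact aSeq_strictMono.monotone n.le_succ) (by positivity) le_rfl
    _ = 8 / (aSeq n ^ 3 * aSeq (n + 1)) * (aSeq (n + 1) / 4) := by field_simp; ring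

lemma lipschitzOnWith_bSeq_cSeq (hf₀ : PWConstruction f₀) {n : ℕ} (hn : 2 ≤ n) :
    LipschitzOnWith (8 / (aSeq n ^ 3 * aSeq (n + 1))).toNNReal f₀ (Icc (bSeq n) (cSeq n)) := by
  have := aSeq_pos n
  have := aSeq_pos (n + 1)
  have := one_le_log_natCast_add_one hn
  have hb := hf₀.apply_bSeq_mem_Icc hn
  refine (hf₀.affineOnIcc_bSeq_cSeq (by omega)).lipschitzOnWith (by positivity)
    (quarter_le_cSeq_sub_bSeq (by omega)) ?_
  rw [hf₀.apply_cSeq (by omega)]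
  calc |2 / aSeq n ^ 3 - f₀ (bSeq n)| ≤ 2 / aSeq n ^ 3 :=
        abs_sub_le_of_nonneg_of_le (by positivity) le_rfl
          ((by positivity : (0 : ℝ) ≤ 2 / aSeq n ^ 3 / log ((n : ℝ) + 1)).trans hb.1) hb.2
    _ = 8 / (aSeq n ^ 3 * aSeq (n + 1)) * (aSeq (n + 1) / 4) := by field_simp; ring

lemma lipschitzOnWith_aSeq_bSeq (hf₀ : PWConstruction f₀) {n : ℕ} (hn : 2 ≤ n) :
    LipschitzOnWith (2 / (aSeq n ^ 3 * (bSeq n - aSeq n))).toNNReal f₀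
      (Icc (aSeq n) (bSeq n)) := by
  have := aSeq_pos n
  have hab := sub_pos.2 (aSeq_lt_bSeq (by omega : 1 ≤ n))
  have := one_le_log_natCast_add_one hn
  have hb := hf₀.apply_bSeq_mem_Icc hn
  refine (hf₀.affineOnIcc_aSeq_bSeq (by omega)).lipschitzOnWith hab le_rfl ?_
  rw [hf₀.apply_aSeq (by omega)]
  calc |f₀ (bSeq n) - 2 / aSeq n ^ 3| ≤ 2 / aSeq n ^ 3 :=
        abs_sub_le_of_nonneg_of_le ((by positivity : (0 : ℝ) ≤ _ / log ((n : ℝ) + 1)).trans hb.1)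
          hb.2 (by positivity) le_rfl
    _ = 2 / (aSeq n ^ 3 * (bSeq n - aSeq n)) * (bSeq n - aSeq n) := by field_simp

lemma le_apply_of_mem_Icc_aSeq_cSeq (hf₀ : PWConstruction f₀) {n : ℕ} (hn : 2 ≤ n) {x : ℝ}
    (hx : x ∈ Icc (aSeq n) (cSeq n)) : 2 / aSeq n ^ 3 / log ((n : ℝ) + 1) ≤ f₀ x := by
  have hb := hf₀.apply_bSeq_mem_Icc hn
  have ha : 2 / aSeq n ^ 3 / log ((n : ℝ) + 1) ≤ f₀ (aSeq n) := by
    rw [hf₀.apply_aSeq (by omega)]; exact hb.1.trans hb.2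
  have hc : 2 / aSeq n ^ 3 / log ((n : ℝ) + 1) ≤ f₀ (cSeq n) := by
    rw [hf₀.apply_cSeq (by omega)]; exact hb.1.trans hb.2
  rcases le_or_gt x (bSeq n) with hxb | hbx
  · exact (le_inf ha hb.1).trans
      ((hf₀.affineOnIcc_aSeq_bSeq (by omega)).mem_uIcc ⟨hx.1, hxb⟩).1
  · exact (le_inf hb.1 hc).trans
      ((hf₀.affineOnIcc_bSeq_cSeq (by omega)).mem_uIcc ⟨hbx.le, hx.2⟩).1

lemma le_apply_of_mem_Icc_cSeq_aSeq (hf₀ : PWConstruction f₀) {n : ℕ} (hn : 1 ≤ n) {x : ℝ}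
    (hx : x ∈ Icc (cSeq n) (aSeq (n + 1))) : 2 / aSeq (n + 1) ^ 3 ≤ f₀ x := by
  have := aSeq_pos n
  have hc : 2 / aSeq (n + 1) ^ 3 ≤ f₀ (cSeq n) := by
    rw [hf₀.apply_cSeq hn]; gcongr; exact aSeq_strictMono.monotone n.le_succ
  exact (le_inf hc (hf₀.apply_aSeq (by omega)).ge).trans
    ((hf₀.affineOnIcc_cSeq_aSeq hn).mem_uIcc hx).1

lemma abs_apply_sub_div_apply_sub_one_le_of_le_cSeq (hf₀ : PWConstruction f₀) {n : ℕ}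
    (hm : mIdx (n + 1) + 2 ≤ n + 1) {x : ℝ} (hx : x ∈ Ioc (aSeq (n + 1)) (cSeq (n + 1))) :
    |f₀ (x - aSeq (mIdx (n + 1))) / f₀ x - 1| ≤
      4 * aSeq (mIdx (n + 1)) * log ((↑(n + 1) : ℝ) + 1) * aSeq (n + 1) ^ 2 / aSeq n ^ 3
        + 1 / log ((↑(n + 1) : ℝ) + 1) := by
  have hn : 1 ≤ n := by have := one_le_mIdx (n + 1); omega
  set s := aSeq (mIdx (n + 1))
  set L := log ((↑(n + 1) : ℝ) + 1)
  have hs : 0 < s := aSeq_pos _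
  have hL : 1 ≤ L := one_le_log_natCast_add_one (by omega)
  have ha := aSeq_pos n
  have ha' := aSeq_pos (n + 1)
  have ha'' := aSeq_pos (n + 2)
  have hba : bSeq (n + 1) - aSeq (n + 1) = s * L ^ 2 := bSeq_sub_aSeq _
  set K := 8 / (aSeq n ^ 3 * aSeq (n + 1)) + 2 / (aSeq (n + 1) ^ 3 * (s * L ^ 2))
  have hlip : LipschitzOnWith K.toNNReal f₀ (Icc (cSeq n) (cSeq (n + 1))) := by
    have hK₁ := hf₀.lipschitzOnWith_cSeq_aSeq hn
    have hK₂ := hf₀.lipschitzOnWith_aSeq_bSeq (n := n + 1) (by omega)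
    have hK₃ := hf₀.lipschitzOnWith_bSeq_cSeq (n := n + 1) (by omega)
    rw [hba] at hK₂
    refine (hK₁.weaken (toNNReal_le_toNNReal ?_)).Icc_trans
      ((hK₂.weaken (toNNReal_le_toNNReal ?_)).Icc_trans (hK₃.weaken (toNNReal_le_toNNReal ?_)))
    · exact le_add_of_nonneg_right (by positivity)
    · exact le_add_of_nonneg_left (by positivity)
    · refine le_add_of_le_of_nonneg ?_ (by positivity)
      gcongr <;> exact aSeq_strictMono.monotone (by omega)
  have hc := quarter_le_aSeq_succ_sub_cSeq hn
  have h4s : 4 * s ≤ aSeq (n + 1) := four_mul_aSeq_le hm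
  calc |f₀ (x - s) / f₀ x - 1|
      ≤ K.toNNReal * |x - s - x| / (2 / aSeq (n + 1) ^ 3 / L) :=
        hlip.abs_div_sub_one_le ⟨by linarith [hx.1], hx.2⟩ ⟨by linarith [hx.1], by linarith [hx.2]⟩
          (by positivity) (hf₀.le_apply_of_mem_Icc_aSeq_cSeq (by omega) ⟨hx.1.le, hx.2⟩)
    _ = 4 * s * L * aSeq (n + 1) ^ 2 / aSeq n ^ 3 + 1 / L := by
        rw [coe_toNNReal _ (by positivity), sub_sub_cancel_left, abs_neg, abs_of_pos hs]
        simp only [K]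
        field_simp
        ring

lemma abs_apply_sub_div_apply_sub_one_le_of_cSeq_lt (hf₀ : PWConstruction f₀) {n : ℕ}
    (hm : mIdx n + 2 ≤ n) {x : ℝ} (hx : x ∈ Ioc (cSeq n) (aSeq (n + 1))) :
    |f₀ (x - aSeq (mIdx n)) / f₀ x - 1| ≤ 4 * aSeq (mIdx n) * aSeq (n + 1) ^ 2 / aSeq n ^ 3 := by
  have hn : 2 ≤ n := by have := one_le_mIdx n; omega
  set s := aSeq (mIdx n)
  have hs : 0 < s := aSeq_pos _
  have ha := aSeq_pos n
  have ha' := aSeq_pos (n + 1)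
  have hlip :=
    (hf₀.lipschitzOnWith_bSeq_cSeq hn).Icc_trans (hf₀.lipschitzOnWith_cSeq_aSeq (by omega))
  have hcb := quarter_le_cSeq_sub_bSeq (by omega : 1 ≤ n)
  have h4s : 4 * s ≤ aSeq (n + 1) := four_mul_aSeq_le (by omega)
  calc |f₀ (x - s) / f₀ x - 1|
      ≤ (8 / (aSeq n ^ 3 * aSeq (n + 1))).toNNReal * |x - s - x| / (2 / aSeq (n + 1) ^ 3) :=
        hlip.abs_div_sub_one_le ⟨by linarith [hx.1], hx.2⟩ ⟨by linarith [hx.1], by linarith [hx.2]⟩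
          (by positivity) (hf₀.le_apply_of_mem_Icc_cSeq_aSeq (by omega) ⟨hx.1.le, hx.2⟩)
    _ = 4 * s * aSeq (n + 1) ^ 2 / aSeq n ^ 3 := by
        rw [coe_toNNReal _ (by positivity), sub_sub_cancel_left, abs_neg, abs_of_pos hs]
        field_simp
        ring

lemma abs_apply_sub_div_apply_sub_one_le (hf₀ : PWConstruction f₀) {n : ℕ} (hn : 48 ≤ n)
    {x : ℝ} (hx : x ∈ Ioc (aSeq n) (aSeq (n + 1))) :
    |f₀ (x - aSeq (mIdx n)) / f₀ x - 1| ≤ 1 / log ((n : ℝ) + 1) + 2 ^ 16 / 2 ^ n := by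
  have hm := mIdx_add_four_le hn
  have hL : 0 ≤ log ((n : ℝ) + 1) := (zero_le_one).trans (one_le_log_natCast_add_one (by omega))
  rcases le_or_gt x (cSeq n) with hxc | hcx
  · obtain ⟨k, rfl⟩ : ∃ k, n = k + 1 := ⟨n - 1, by omega⟩
    calc _ ≤ _ := hf₀.abs_apply_sub_div_apply_sub_one_le_of_le_cSeq (by omega) ⟨hx.1, hxc⟩
      _ ≤ 2 ^ 15 / 2 ^ (k + 1) + 1 / log ((↑(k + 1) : ℝ) + 1) := by
          grw [four_mul_aSeq_mul_log_mul_div_le (m := mIdx (k + 1)) (by omega) hL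
            (log_natCast_add_one_le_two_pow _)]
      _ ≤ _ := by rw [add_comm]; gcongr <;> norm_num
  · calc _ ≤ _ := hf₀.abs_apply_sub_div_apply_sub_one_le_of_cSeq_lt (by omega) ⟨hcx, hx.2⟩
      _ ≤ 2 ^ 16 / 2 ^ n := four_mul_aSeq_mul_div_le hm
      _ ≤ _ := le_add_of_nonneg_left (by positivity)

end PWConstruction

lemma tendsto_one_div_log_add_div_two_pow :
    Tendsto (fun n : ℕ ↦ 1 / log ((n : ℝ) + 1) + 2 ^ 16 / 2 ^ n) atTop (𝓝 0) := by
  have h₁ : Tendsto (fun n : ℕ ↦ 1 / log ((n : ℝ) + 1)) atTop (𝓝 0) :=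
    tendsto_const_nhds.div_atTop
      (tendsto_log_atTop.comp (tendsto_atTop_add_const_right _ 1 tendsto_natCast_atTop_atTop))
  have h₂ : Tendsto (fun n : ℕ ↦ (2 : ℝ) ^ 16 / 2 ^ n) atTop (𝓝 0) :=
    tendsto_const_nhds.div_atTop (tendsto_pow_atTop_atTop_of_one_lt one_lt_two)
  simpa using h₁.add h₂

theorem pw_density_shift_by_a_m_n_uniform (f₀ : ℝ → ℝ)
    (hf₀ : PWConstruction f₀) (f : ℝ → ℝ) (hf : f = normExt f₀) :
    ∀ ε > (0:ℝ), ∃ N : ℕ, ∀ n : ℕ, N ≤ n →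
      ∀ x ∈ Set.Ioc (aSeq n) (aSeq (n + 1)),
        |f (x - aSeq (mIdx n)) / f x - 1| ≤ ε := by
  intro ε hε
  obtain ⟨N, hN⟩ := eventually_atTop.1
    ((tendsto_one_div_log_add_div_two_pow.eventually (gt_mem_nhds hε)).and (eventually_ge_atTop 48))
  refine ⟨N, fun n hn x hx ↦ ?_⟩
  obtain ⟨hε', hn⟩ := hN n hn
  have hs : aSeq (mIdx n) ≤ aSeq n := aSeq_strictMono.monotone (mIdx_le_self (by omega))
  have hx0 : 0 ≤ x := (aSeq_pos n).le.trans hx.1.le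
  rw [hf, hf₀.normExt_div_normExt hx0 (by linarith [hx.1])]
  exact (hf₀.abs_apply_sub_div_apply_sub_one_le hn hx).trans hε'.le
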